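/- Let n_c > 0 be a constant and let f : ℝ³ → (0,∞) be continuous. Suppose that: (i) for all p, p_*, p', p'_* ∈ ℝ³ with p + p_* = p' + p'_* and |p|² + |p_*|² = |p'|² + |p'_*|², one has (f(p')/(1+f(p'))) · (f(p'_*)/(1+f(p'_*))) = (f(p)/(1+f(p))) · (f(p_*)/(1+f(p_*))); and (ii) for all p₁, p₂, p₃ ∈ ℝ³ with p₁ = p₂ + p₃ and |p₁|² = |p₂|² + |p₃|² + n_c, one has f(p₁)/(1+f(p₁)) = (f(p₂)/(1+f(p₂))) · (f(p₃)/(1+f(p₃))). Then there exist α > 0 and β ∈ ℝ³ such that f(p) = 1/(exp(α(|p|² + n_c) + β·p) − 1) for all p ∈ ℝ³. -/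

import Mathlib

/-!
Put `g = log (f / (1 + f))`. Relation (i) makes `g` a collision invariant, so `h = g - g 0` is
additive on orthogonal pairs. In dimension at least `3`, for any `u, v` there is a `w` orthogonal
to both with `‖w‖ ^ 2 = |⟪u, v⟫|`; splitting `u + v` (or `u + v + 2 w`) into two orthogonal
summands through `w` shows that the odd part of `h` is additive, hence `⟪b, ·⟫`, while the even
part depends only on `‖p‖ ^ 2` and is additive in it, hence `c ‖p‖ ^ 2`. Relation (ii) then
gives `g 0 = c nc`, and `g 0 < 0` because `f / (1 + f) < 1`, so `α = -c > 0`.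
-/

open Module InnerProductSpace Set
open scoped RealInnerProductSpace

theorem map_eq_mul_of_continuousOn_of_add_of_nonneg {ψ : ℝ → ℝ}
    (hcont : ContinuousOn ψ (Ici 0)) (hadd : ∀ s t, 0 ≤ s → 0 ≤ t → ψ (s + t) = ψ s + ψ t)
    {t : ℝ} (ht : 0 ≤ t) : ψ t = t * ψ 1 := by
  have hψ0 : ψ 0 = 0 := by simpa using hadd 0 0 le_rfl le_rfl
  -- the odd extension of `ψ` is additive on all of `ℝ`
  let Φ : ℝ → ℝ := fun t => ψ (max t 0) - ψ (max (-t) 0)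
  have hΦ_sub : ∀ a b, 0 ≤ a → 0 ≤ b → Φ (a - b) = ψ a - ψ b := by
    intro a b ha hb
    rcases le_total b a with hba | hab
    · have := hadd (a - b) b (sub_nonneg.2 hba) hb
      simp only [Φ, max_eq_left (sub_nonneg.2 hba), neg_sub, max_eq_right (sub_nonpos.2 hba),
        hψ0, sub_add_cancel] at this ⊢
      linarith
    · have := hadd (b - a) a (sub_nonneg.2 hab) ha
      simp only [Φ, max_eq_right (sub_nonpos.2 hab), neg_sub, max_eq_left (sub_nonneg.2 hab),
        hψ0, sub_add_cancel] at this ⊢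
      linarith
  have hΦ_add : ∀ s t, Φ (s + t) = Φ s + Φ t := by
    intro s t
    have hst : s + t = (max s 0 + max t 0) - (max (-s) 0 + max (-t) 0) := by
      linarith [max_zero_sub_max_neg_zero_eq_self s, max_zero_sub_max_neg_zero_eq_self t]
    conv_rhs =>
      rw [← max_zero_sub_max_neg_zero_eq_self s, ← max_zero_sub_max_neg_zero_eq_self t]
    rw [hst, hΦ_sub _ _ (by positivity) (by positivity), hadd _ _ (by positivity) (by positivity),
      hadd _ _ (by positivity) (by positivity), hΦ_sub _ _ (by positivity) (by positivity),
      hΦ_sub _ _ (by positivity) (by positivity)]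
    ring
  have hΦ_cont : Continuous Φ :=
    (hcont.comp_continuous (by fun_prop) fun t => le_max_right t 0).sub
      (hcont.comp_continuous (by fun_prop) fun t => le_max_right (-t) 0)
  have hΦ_eq : ∀ t, 0 ≤ t → Φ t = ψ t := fun t ht => by
    simpa [hψ0] using hΦ_sub t 0 ht le_rfl
  have hΦ_lin := map_real_smul (AddMonoidHom.mk' Φ hΦ_add) hΦ_cont t 1
  simp only [AddMonoidHom.mk'_apply, smul_eq_mul, mul_one] at hΦ_lin
  rw [← hΦ_eq t ht, ← hΦ_eq 1 zero_le_one, hΦ_lin]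

variable {E : Type*} [NormedAddCommGroup E] [InnerProductSpace ℝ E]

theorem exists_inner_eq_zero_inner_eq_zero_norm_eq [FiniteDimensional ℝ E]
    (hE : 3 ≤ finrank ℝ E) (u v : E) {t : ℝ} (ht : 0 ≤ t) :
    ∃ w : E, ⟪u, w⟫ = 0 ∧ ⟪v, w⟫ = 0 ∧ ‖w‖ = t := by
  classical
  let K := Submodule.span ℝ (({u, v} : Finset E) : Set E)
  have hK : finrank ℝ K ≤ 2 := (finrank_span_finset_le_card _).trans Finset.card_le_two
  have : Nontrivial Kᗮ := by
    rw [← Module.finrank_pos_iff (R := ℝ)]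
    have := K.finrank_add_finrank_orthogonal
    omega
  obtain ⟨w, hw⟩ := exists_norm_eq Kᗮ ht
  refine ⟨w, ?_, ?_, hw⟩ <;>
    exact Submodule.inner_right_of_mem_orthogonal (Submodule.subset_span (by simp)) w.2

def OrthogonallyAdditive (h : E → ℝ) : Prop :=
  ∀ u v : E, ⟪u, v⟫ = 0 → h (u + v) = h u + h v

namespace OrthogonallyAdditive

variable {h k : E → ℝ}

theorem add (hh : OrthogonallyAdditive h) (hk : OrthogonallyAdditive k) :
    OrthogonallyAdditive (h + k) := fun u v huv => by
  simp only [Pi.add_apply, hh u v huv, hk u v huv]; ring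

theorem sub (hh : OrthogonallyAdditive h) (hk : OrthogonallyAdditive k) :
    OrthogonallyAdditive (h - k) := fun u v huv => by
  simp only [Pi.sub_apply, hh u v huv, hk u v huv]; ring

theorem comp_neg (hh : OrthogonallyAdditive h) : OrthogonallyAdditive (h ∘ Neg.neg) :=
  fun u v huv => by
    simp only [Function.comp_apply, neg_add]
    exact hh _ _ (by rwa [inner_neg_neg])

theorem eq_of_norm_eq (hh : OrthogonallyAdditive h) (heven : ∀ p, h (-p) = h p) {p q : E}
    (hpq : ‖p‖ = ‖q‖) : h p = h q := by
  set s : E := (1 / 2 : ℝ) • (p + q)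
  set d : E := (1 / 2 : ℝ) • (p - q)
  have hsd : ⟪s, d⟫ = 0 := by
    rw [real_inner_smul_left, real_inner_smul_right, (real_inner_add_sub_eq_zero_iff p q).2 hpq]
    ring
  calc h p = h (s + d) := by congr 1; module
    _ = h (s + -d) := by
      rw [hh s d hsd, hh s (-d) (by rw [inner_neg_right, hsd, neg_zero]), heven]
    _ = h q := by congr 1; module

variable [FiniteDimensional ℝ E]

theorem exists_eq_mul_norm_sq_of_even (hE : 3 ≤ finrank ℝ E) (hh : OrthogonallyAdditive h)
    (heven : ∀ p, h (-p) = h p) (hcont : Continuous h) : ∃ c : ℝ, ∀ p, h p = c * ‖p‖ ^ 2 := by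
  obtain ⟨x, -, -, hx⟩ := exists_inner_eq_zero_inner_eq_zero_norm_eq hE 0 0 zero_le_one
  set ψ : ℝ → ℝ := fun t => h (√t • x)
  have hnorm_smul : ∀ {t : ℝ}, 0 ≤ t → ‖√t • x‖ = √t := fun ht => by
    rw [norm_smul, hx, mul_one, Real.norm_of_nonneg (Real.sqrt_nonneg _)]
  have hψ : ∀ p, h p = ψ (‖p‖ ^ 2) := fun p =>
    hh.eq_of_norm_eq heven (by rw [hnorm_smul (sq_nonneg _), Real.sqrt_sq (norm_nonneg p)])
  have hψ_add : ∀ s t, 0 ≤ s → 0 ≤ t → ψ (s + t) = ψ s + ψ t := by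
    intro s t hs ht
    obtain ⟨w, hxw, -, hw⟩ :=
      exists_inner_eq_zero_inner_eq_zero_norm_eq hE x x (Real.sqrt_nonneg t)
    have horth : ⟪√s • x, w⟫ = 0 := by rw [real_inner_smul_left, hxw, mul_zero]
    have hsum : ‖√s • x + w‖ ^ 2 = s + t := by
      rw [norm_add_sq_real, horth, hnorm_smul hs, hw, Real.sq_sqrt hs, Real.sq_sqrt ht]; ring
    rw [← hsum, ← hψ, hh _ _ horth, hψ w, hw, Real.sq_sqrt ht]
  refine ⟨ψ 1, fun p => ?_⟩
  rw [hψ, map_eq_mul_of_continuousOn_of_add_of_nonneg (by fun_prop) hψ_add (sq_nonneg _),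
    mul_comm]

theorem map_add_of_odd_of_inner_nonneg (hE : 3 ≤ finrank ℝ E) (hh : OrthogonallyAdditive h)
    (hodd : ∀ p, h (-p) = -h p) {u v : E} (huv : 0 ≤ ⟪u, v⟫) : h (u + v) = h u + h v := by
  obtain ⟨w, huw, hvw, hw⟩ :=
    exists_inner_eq_zero_inner_eq_zero_norm_eq hE u v (Real.sqrt_nonneg ⟪u, v⟫)
  -- `u + w ⊥ v - w` because `‖w‖ ^ 2 = ⟪u, v⟫`
  have horth : ⟪u + w, v + -w⟫ = 0 := by
    rw [inner_add_left, inner_add_right, inner_add_right, inner_neg_right, inner_neg_right,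
      real_inner_self_eq_norm_sq, hw, Real.sq_sqrt huv, huw, real_inner_comm v w, hvw]
    ring
  calc h (u + v) = h ((u + w) + (v + -w)) := by congr 1; abel
    _ = h u + h v := by
      rw [hh _ _ horth, hh u w huw, hh v (-w) (by rw [inner_neg_right, hvw, neg_zero]), hodd]
      ring

theorem map_add_of_odd (hE : 3 ≤ finrank ℝ E) (hh : OrthogonallyAdditive h)
    (hodd : ∀ p, h (-p) = -h p) (u v : E) : h (u + v) = h u + h v := by
  rcases le_or_gt 0 ⟪u, v⟫ with huv | huv
  · exact hh.map_add_of_odd_of_inner_nonneg hE hodd huv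
  obtain ⟨w, huw, hvw, hw⟩ :=
    exists_inner_eq_zero_inner_eq_zero_norm_eq hE u v (Real.sqrt_nonneg (-⟪u, v⟫))
  -- `u + w ⊥ v + w` because `‖w‖ ^ 2 = -⟪u, v⟫`, and `w ⊥ u + v`
  have horth : ⟪u + w, v + w⟫ = 0 := by
    rw [inner_add_left, inner_add_right, inner_add_right, real_inner_self_eq_norm_sq, hw,
      Real.sq_sqrt (by linarith), huw, real_inner_comm v w, hvw]
    ring
  have hdouble : h (w + w) = h w + h w :=
    hh.map_add_of_odd_of_inner_nonneg hE hodd real_inner_self_nonneg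
  have key := hh _ _ horth
  rw [show u + w + (v + w) = (u + v) + (w + w) by abel, hh _ _ (by
    rw [inner_add_left, inner_add_right, inner_add_right, huw, hvw]; ring),
    hdouble, hh u w huw, hh v w hvw] at key
  linarith

theorem exists_eq_inner_of_odd (hE : 3 ≤ finrank ℝ E) (hh : OrthogonallyAdditive h)
    (hodd : ∀ p, h (-p) = -h p) (hcont : Continuous h) : ∃ b : E, ∀ p, h p = ⟪b, p⟫ :=
  ⟨(toDual ℝ E).symm ((AddMonoidHom.mk' h (hh.map_add_of_odd hE hodd)).toRealLinearMap hcont),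
    fun p => by rw [toDual_symm_apply]; rfl⟩

theorem exists_eq_mul_norm_sq_add_inner (hE : 3 ≤ finrank ℝ E) (hh : OrthogonallyAdditive h)
    (hcont : Continuous h) : ∃ (c : ℝ) (b : E), ∀ p, h p = c * ‖p‖ ^ 2 + ⟪b, p⟫ := by
  obtain ⟨c, hc⟩ := (hh.add hh.comp_neg).exists_eq_mul_norm_sq_of_even hE
    (fun p => by simp [add_comm]) (by fun_prop)
  obtain ⟨b, hb⟩ := (hh.sub hh.comp_neg).exists_eq_inner_of_odd hE
    (fun p => by simp) (by fun_prop)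
  refine ⟨c / 2, (1 / 2 : ℝ) • b, fun p => ?_⟩
  have hcp := hc p
  have hbp := hb p
  simp only [Pi.add_apply, Pi.sub_apply, Function.comp_apply] at hcp hbp
  rw [real_inner_smul_left]
  linarith

end OrthogonallyAdditive

def IsCollisionInvariant (g : E → ℝ) : Prop :=
  ∀ p ps p' ps' : E, p + ps = p' + ps' → ‖p‖ ^ 2 + ‖ps‖ ^ 2 = ‖p'‖ ^ 2 + ‖ps'‖ ^ 2 →
    g p' + g ps' = g p + g ps

namespace IsCollisionInvariant

variable {g : E → ℝ}

theorem orthogonallyAdditive_sub_map_zero (hg : IsCollisionInvariant g) :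
    OrthogonallyAdditive fun p => g p - g 0 := by
  intro u v huv
  have := hg (u + v) 0 u v (add_zero _) (by rw [norm_add_sq_real, huv, norm_zero]; ring)
  linarith

theorem exists_eq [FiniteDimensional ℝ E] (hE : 3 ≤ finrank ℝ E) (hg : IsCollisionInvariant g)
    (hcont : Continuous g) : ∃ (c : ℝ) (b : E), ∀ p, g p = g 0 + c * ‖p‖ ^ 2 + ⟪b, p⟫ := by
  obtain ⟨c, b, hcb⟩ :=
    hg.orthogonallyAdditive_sub_map_zero.exists_eq_mul_norm_sq_add_inner hE (by fun_prop)
  exact ⟨c, b, fun p => by linarith [hcb p]⟩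

end IsCollisionInvariant

theorem one_div_exp_neg_log_div_one_add_sub_one {x : ℝ} (hx : 0 < x) :
    1 / (Real.exp (-Real.log (x / (1 + x))) - 1) = x := by
  rw [Real.exp_neg, Real.exp_log (by positivity), inv_div, div_sub_one hx.ne',
    add_sub_cancel_right, one_div_one_div]

/-- the equilibrium relations for the collision operators `C₂₂` (between
excitations) and `C₁₂` (between excitations and a condensate of density `n_c`) force a
continuous positive density to be the Planckian `1/(exp(α(|p|² + n_c) + β·p) − 1)`. -/
theorem planckian_of_condensate_equilibrium
    (nc : ℝ) (hnc : 0 < nc)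
    (f : EuclideanSpace ℝ (Fin 3) → ℝ)
    (hfpos : ∀ p, 0 < f p)
    (hfcont : Continuous f)
    (hC22 : ∀ p ps p' ps' : EuclideanSpace ℝ (Fin 3),
      p + ps = p' + ps' → ‖p‖ ^ 2 + ‖ps‖ ^ 2 = ‖p'‖ ^ 2 + ‖ps'‖ ^ 2 →
      (f p' / (1 + f p')) * (f ps' / (1 + f ps'))
        = (f p / (1 + f p)) * (f ps / (1 + f ps)))
    (hC12 : ∀ p1 p2 p3 : EuclideanSpace ℝ (Fin 3),
      p1 = p2 + p3 → ‖p1‖ ^ 2 = ‖p2‖ ^ 2 + ‖p3‖ ^ 2 + nc →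
      f p1 / (1 + f p1) = (f p2 / (1 + f p2)) * (f p3 / (1 + f p3))) :
    ∃ (α : ℝ) (β : EuclideanSpace ℝ (Fin 3)), 0 < α ∧
      ∀ p, f p = 1 / (Real.exp (α * (‖p‖ ^ 2 + nc) + inner ℝ β p) - 1) := by
  have hden_pos : ∀ p, 0 < 1 + f p := fun p => by linarith [hfpos p]
  have hF_pos : ∀ p, 0 < f p / (1 + f p) := fun p => div_pos (hfpos p) (hden_pos p)
  set g : EuclideanSpace ℝ (Fin 3) → ℝ := fun p => Real.log (f p / (1 + f p))
  have hg_add : ∀ p q, g p + g q = Real.log (f p / (1 + f p) * (f q / (1 + f q))) := fun p q =>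
    (Real.log_mul (hF_pos p).ne' (hF_pos q).ne').symm
  have hg_inv : IsCollisionInvariant g := fun p ps p' ps' hmom hen => by
    rw [hg_add, hg_add, hC22 p ps p' ps' hmom hen]
  have hg_cont : Continuous g :=
    (hfcont.div (continuous_const.add hfcont) fun p => (hden_pos p).ne').log
      fun p => (hF_pos p).ne'
  obtain ⟨c, b, hcb⟩ := hg_inv.exists_eq (by simp) hg_cont
  obtain ⟨z, hz⟩ := exists_norm_eq (EuclideanSpace ℝ (Fin 3)) (Real.sqrt_nonneg (nc / 2))
  have hz2 : ‖z‖ ^ 2 = nc / 2 := by rw [hz, Real.sq_sqrt (by positivity)]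
  have hzz : ‖z + z‖ ^ 2 = ‖z‖ ^ 2 + ‖z‖ ^ 2 + nc := by
    rw [norm_add_sq_real, real_inner_self_eq_norm_sq, hz2]; ring
  have hg0 : g 0 = c * nc := by
    have hC12z : g (z + z) = g z + g z := by rw [hg_add, ← hC12 (z + z) z z rfl hzz]
    rw [hcb (z + z), hcb z, inner_add_right, hzz, hz2] at hC12z
    linarith
  have hg0_neg : g 0 < 0 :=
    Real.log_neg (hF_pos 0) ((div_lt_one (hden_pos 0)).2 (by linarith))
  refine ⟨-c, -b, by nlinarith, fun p => ?_⟩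
  calc f p = 1 / (Real.exp (-g p) - 1) :=
        (one_div_exp_neg_log_div_one_add_sub_one (hfpos p)).symm
    _ = _ := by rw [hcb p, inner_neg_left, hg0]; ring_nf
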